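/- Let δ be a circular semi-flower automaton with state set Q, alphabet A, initial-final state q0, and distinguished letter a whose letter map ā is a circular permutation. Then for every word x ∈ A*, if the induced map x̄ : Q → Q is bijective, then x̄ = ā^k where k is the length of x. -/
import Mathlib


/-- Extension of the transition function `δ : Q → A → Q` to words (lists of letters):
`δ*(q, ε) = q` and `δ*(q, a·w) = δ*(δ(q,a), w)`. -/
def deltaStar {Q A : Type*} (δ : Q → A → Q) : Q → List A → Q
  | q, [] => q
  | q, a :: w => deltaStar δ (δ q a) w

/-- `δ` (with initial-final state `q0`) is a semi-flower automaton: every state is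
accessible and coaccessible, and every cycle passes through `q0` (i.e. for every
nonempty word `w` labelling a cycle at `q`, some prefix of `w` leads from `q` to `q0`). -/
def IsSFA {Q A : Type*} (δ : Q → A → Q) (q0 : Q) : Prop :=
  (∀ q : Q, ∃ w : List A, deltaStar δ q0 w = q) ∧
  (∀ q : Q, ∃ w : List A, deltaStar δ q w = q0) ∧
  (∀ (q : Q) (w : List A), w ≠ [] → deltaStar δ q w = q →
    ∃ u : List A, u <+: w ∧ deltaStar δ q u = q0)

/-- A map `f : Q → Q` is a circular permutation if it is bijective and for all
`p q : Q` there is `k : ℕ` with `f^[k] p = q`. -/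
def IsCircularPerm {Q : Type*} (f : Q → Q) : Prop :=
  Function.Bijective f ∧ ∀ p q : Q, ∃ k : ℕ, f^[k] p = q

/-- The set of branch points going in (bpis): states that are the target of two
distinct transitions. -/
def BPI {Q A : Type*} (δ : Q → A → Q) : Set Q :=
  {q | ∃ pb₁ pb₂ : Q × A, pb₁ ≠ pb₂ ∧ δ pb₁.1 pb₁.2 = q ∧ δ pb₂.1 pb₂.2 = q}


lemma deltaStar_replicate {Q A : Type*} (δ : Q → A → Q) (a : A) (k : ℕ) (q : Q) :
    deltaStar δ q (List.replicate k a) = (fun q => δ q a)^[k] q := by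
  induction k generalizing q with
  | zero => rfl
  | succ k ih =>
    rw [List.replicate_succ]
    show deltaStar δ (δ q a) (List.replicate k a) = _
    rw [ih, Function.iterate_succ_apply]

lemma csfa_bijective_letter_eq_a {Q A : Type*} [Fintype Q]
    (δ : Q → A → Q) (q0 : Q) (hSFA : IsSFA δ q0)
    (a : A) (hca : IsCircularPerm (fun q => δ q a))
    (b : A) (hb : Function.Bijective (fun q => δ q b)) :
    (fun q => δ q b) = (fun q => δ q a) := by
  classical
  set abar : Q → Q := fun q => δ q a with habar
  set bbar : Q → Q := fun q => δ q b with hbbar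
  have hex : ∀ p q : Q, ∃ k : ℕ, abar^[k] p = q := hca.2
  set d : Q → ℕ := fun q => Nat.find (hex q q0) with hdd
  have hd : ∀ q, abar^[d q] q = q0 := fun q => Nat.find_spec (hex q q0)
  have hdmin : ∀ q k, abar^[k] q = q0 → d q ≤ k := fun q k h => Nat.find_min' (hex q q0) h
  have hainj : Function.Injective abar := hca.1.injective
  have hd0 : d q0 = 0 := Nat.le_zero.mp (hdmin q0 0 rfl)
  have hdeq0 : ∀ q, d q = 0 → q = q0 := by
    intro q h
    have := hd q
    rwa [h] at this
  have hdinj : Function.Injective d := by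
    intro p q h
    have h1 : abar^[d p] p = abar^[d p] q := by rw [hd p, h, hd q]
    exact Function.Injective.iterate hainj (d p) h1
  -- bound: d q < card Q
  have hlt : ∀ q, d q < Fintype.card Q := by
    intro q
    have hinj : Function.Injective (fun i : Fin (d q + 1) => abar^[(i : ℕ)] q) := by
      intro i j hij
      simp only at hij
      rcases le_total (i : ℕ) (j : ℕ) with hle | hle
      · have h1 : abar^[(i : ℕ)] (abar^[(j : ℕ) - (i : ℕ)] q) = abar^[(i : ℕ)] q := by
          rw [← Function.iterate_add_apply, Nat.add_sub_cancel' hle, hij]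
        have h2 : abar^[(j : ℕ) - (i : ℕ)] q = q := Function.Injective.iterate hainj _ h1
        have h3 : abar^[d q - ((j : ℕ) - (i : ℕ))] q = q0 := by
          have : abar^[d q - ((j : ℕ) - (i : ℕ)) + ((j : ℕ) - (i : ℕ))] q = q0 := by
            rw [Nat.sub_add_cancel (by omega : (j : ℕ) - (i : ℕ) ≤ d q)]
            exact hd q
          rwa [Function.iterate_add_apply, h2] at this
        have := hdmin q _ h3
        have hji : (j : ℕ) - (i : ℕ) = 0 := by omega
        exact Fin.ext (by omega)
      · have h1 : abar^[(j : ℕ)] (abar^[(i : ℕ) - (j : ℕ)] q) = abar^[(j : ℕ)] q := by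
          rw [← Function.iterate_add_apply, Nat.add_sub_cancel' hle, hij]
        have h2 : abar^[(i : ℕ) - (j : ℕ)] q = q := Function.Injective.iterate hainj _ h1
        have h3 : abar^[d q - ((i : ℕ) - (j : ℕ))] q = q0 := by
          have : abar^[d q - ((i : ℕ) - (j : ℕ)) + ((i : ℕ) - (j : ℕ))] q = q0 := by
            rw [Nat.sub_add_cancel (by omega : (i : ℕ) - (j : ℕ) ≤ d q)]
            exact hd q
          rwa [Function.iterate_add_apply, h2] at this
        have := hdmin q _ h3
        exact Fin.ext (by omega)
    have := Fintype.card_le_of_injective _ hinj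
    simpa using this
  -- step: d (abar q) + 1 = d q for q ≠ q0
  have hstep : ∀ q, q ≠ q0 → d (abar q) + 1 = d q := by
    intro q hq
    have hdq : d q ≠ 0 := fun h => hq (hdeq0 q h)
    have h1 : abar^[d q - 1] (abar q) = q0 := by
      have : abar^[d q - 1 + 1] q = q0 := by
        rw [Nat.sub_add_cancel (Nat.one_le_iff_ne_zero.mpr hdq)]; exact hd q
      rwa [Function.iterate_succ_apply] at this
    have h2 : d (abar q) ≤ d q - 1 := hdmin _ _ h1
    have h3 : abar^[d (abar q) + 1] q = q0 := by
      rw [Function.iterate_succ_apply]; exact hd (abar q)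
    have h4 : d q ≤ d (abar q) + 1 := hdmin _ _ h3
    omega
  -- descent: for q ≠ q0, d (bbar q) < d q
  have hdesc : ∀ q, q ≠ q0 → d (bbar q) < d q := by
    intro q hq
    set p := bbar q with hp
    have ht := hex p q
    set t := Nat.find ht with htdef
    have htspec : abar^[t] p = q := Nat.find_spec ht
    have hw : deltaStar δ q (b :: List.replicate t a) = q := by
      show deltaStar δ (δ q b) (List.replicate t a) = q
      rw [deltaStar_replicate]; exact htspec
    obtain ⟨u, hu, hu0⟩ := hSFA.2.2 q (b :: List.replicate t a) (List.cons_ne_nil _ _) hw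
    have hdp_le_t : d p ≤ t := by
      rcases u with _ | ⟨c, u'⟩
      · exact absurd hu0 hq
      · obtain ⟨hc, hu'⟩ := List.cons_prefix_cons.mp hu
        have hu'eq : u' = List.replicate (u'.length ⊓ t) a := by
          have h := List.prefix_iff_eq_take.mp hu'
          rwa [List.take_replicate] at h
        rw [hc, hu'eq] at hu0
        have hu0' : abar^[u'.length ⊓ t] (δ q b) = q0 := by
          rw [← deltaStar_replicate]; exact hu0
        have h5 : d p ≤ u'.length ⊓ t := hdmin p _ hu0'
        exact le_trans h5 inf_le_right
    by_contra hcon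
    have hge : d q ≤ d p := by omega
    have h1 : abar^[d q] (abar^[d p - d q] p) = abar^[d q] q := by
      rw [← Function.iterate_add_apply, Nat.add_sub_cancel' hge, hd p, hd q]
    have h2 : abar^[d p - d q] p = q := Function.Injective.iterate hainj _ h1
    have h3 : t ≤ d p - d q := Nat.find_min' ht h2
    have hq0 : d q = 0 := by omega
    exact hq (hdeq0 q hq0)
  -- sum argument
  set s : Finset Q := Finset.univ.erase q0 with hs
  have hsum : ∑ q, d (bbar q) = ∑ q, d q := hb.sum_comp d
  have hcards : s.card = Fintype.card Q - 1 := by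
    rw [hs, Finset.card_erase_of_mem (Finset.mem_univ _), Finset.card_univ]
  have hple : ∀ q ∈ s, d (bbar q) + 1 ≤ d q := by
    intro q hq
    exact hdesc q (Finset.ne_of_mem_erase hq)
  have hsum1 : ∑ q ∈ s, (d (bbar q) + 1) ≤ ∑ q ∈ s, d q := Finset.sum_le_sum hple
  have hsplit1 : ∑ q ∈ s, d (bbar q) + d (bbar q0) = ∑ q, d (bbar q) :=
    Finset.sum_erase_add _ _ (Finset.mem_univ _)
  have hsplit2 : ∑ q ∈ s, d q + d q0 = ∑ q, d q :=
    Finset.sum_erase_add _ _ (Finset.mem_univ _)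
  have hsum2 : ∑ q ∈ s, (d (bbar q) + 1) = ∑ q ∈ s, d (bbar q) + s.card := by
    rw [Finset.sum_add_distrib, Finset.sum_const, smul_eq_mul, mul_one]
  have hbq0 : d (bbar q0) ≤ Fintype.card Q - 1 := by
    have := hlt (bbar q0); omega
  have hcardpos : 1 ≤ Fintype.card Q := Fintype.card_pos_iff.mpr ⟨q0⟩
  have heq : ∑ q ∈ s, (d (bbar q) + 1) = ∑ q ∈ s, d q := by omega
  have hpt := (Finset.sum_eq_sum_iff_of_le hple).mp heq
  -- conclude pointwise
  funext q
  by_cases hq : q = q0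
  · rw [hq]
    by_contra hne
    obtain ⟨r, hr⟩ := hb.surjective (abar q0)
    have hrne : r ≠ q0 := by
      intro h; subst h; exact hne hr
    have h1 : d (bbar r) + 1 = d r := hpt r (Finset.mem_erase.mpr ⟨hrne, Finset.mem_univ _⟩)
    have h2 : d (abar r) + 1 = d r := hstep r hrne
    have : bbar r = abar r := hdinj (by omega)
    rw [hr] at this
    exact hrne (hainj this.symm)
  · have h1 : d (bbar q) + 1 = d q := hpt q (Finset.mem_erase.mpr ⟨hq, Finset.mem_univ _⟩)
    have h2 : d (abar q) + 1 = d q := hstep q hq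
    exact hdinj (by omega)


/-- In a circular semi-flower automaton, every bijective word map equals the power
of the letter map of `a` given by the length of the word. -/
theorem csfa_bijective_word_is_power_of_a {Q A : Type*} [Fintype Q] [Nonempty Q] [Fintype A]
    (δ : Q → A → Q) (q0 : Q) (hSFA : IsSFA δ q0)
    (a : A) (hca : IsCircularPerm (fun q => δ q a))
    (x : List A) (hx : Function.Bijective (fun q => deltaStar δ q x)) :
    (fun q => deltaStar δ q x) = (fun q => δ q a)^[x.length] := by
  induction x with
  | nil => funext q; rfl
  | cons b w ih =>
    have hbinj : Function.Injective (fun q => δ q b) := by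
      intro p q h
      apply hx.injective
      show deltaStar δ (δ p b) w = deltaStar δ (δ q b) w
      simp only at h
      rw [h]
    have hbbij : Function.Bijective (fun q => δ q b) :=
      Finite.injective_iff_bijective.mp hbinj
    have hwsurj : Function.Surjective (fun q => deltaStar δ q w) := by
      intro r
      obtain ⟨q, hq⟩ := hx.surjective r
      exact ⟨δ q b, hq⟩
    have hwbij : Function.Bijective (fun q => deltaStar δ q w) :=
      Finite.surjective_iff_bijective.mp hwsurj
    have hba : (fun q => δ q b) = (fun q => δ q a) :=
      csfa_bijective_letter_eq_a δ q0 hSFA a hca b hbbij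
    have hih := ih hwbij
    funext q
    show deltaStar δ (δ q b) w = (fun q => δ q a)^[w.length + 1] q
    have h1 : δ q b = δ q a := congrFun hba q
    calc deltaStar δ (δ q b) w = (fun q => deltaStar δ q w) (δ q a) := by rw [h1]
      _ = (fun q => δ q a)^[w.length] ((fun q => δ q a) q) := by rw [hih]
      _ = (fun q => δ q a)^[w.length + 1] q := (Function.iterate_succ_apply _ _ _).symm
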